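/- There exist a problem-sensitive model M, a world w of M, and distinct atomic propositions p, q such that M, w ⊨ ⊞(p ↔ q) and M, w ⊨ Ip, but M, w ⊭ Iq. Consequently, the principles of closure under necessary equivalence (⊞(φ ↔ ψ) → (Iφ ↔ Iψ)), necessary entailment (⊞(φ → ψ) → (Iφ → Iψ)), closure under logical entailment, and closure under logical equivalence are all invalid over the class of problem-sensitive models, even for atomic propositions. -/

import Mathlib

/-- Formulas of classical propositional logic `L_CPL` over a countable set
of atomic propositions (represented by natural numbers). -/
inductive CPL : Type
  | top : CPL
  | atom : ℕ → CPL
  | neg : CPL → CPL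
  | or : CPL → CPL → CPL
  | and : CPL → CPL → CPL
  deriving DecidableEq
/-- Material implication in `L_CPL`: `φ → ψ := ¬φ ∨ ψ`. -/
def CPL.imp (φ ψ : CPL) : CPL := .or (.neg φ) ψ

/-- Material biconditional in `L_CPL`: `φ ↔ ψ := (φ → ψ) ∧ (ψ → φ)`. -/
def CPL.iff (φ ψ : CPL) : CPL := .and (φ.imp ψ) (ψ.imp φ)
/-- Formulas of the language `L_Int`, extending `L_CPL` (embedded via `of`) by
negation, disjunction, conjunction, the global modality `⊞` (`box`) and the
intention modality `I` (`int`), which applies only to `L_CPL` formulas. -/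
inductive Form : Type
  | of : CPL → Form
  | neg : Form → Form
  | or : Form → Form → Form
  | and : Form → Form → Form
  | box : Form → Form
  | int : CPL → Form
  deriving DecidableEq
/-- A problem-sensitive model `M = (W, R, (P, ⊕, s), f, V)`: a nonempty set of
worlds, a serial accessibility (conative) relation, a problems model, a
function `f` assigning to each world the decision problem the agent faces
there, and a valuation. -/
structure PSModel where
  W : Type
  Wnonempty : Nonempty W
  R : W → W → Prop
  serial : ∀ w, ∃ v, R w v
  P : Type
  Pnonempty : Nonempty P
  fuse : P → P → P
  idem : ∀ a, fuse a a = a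
  comm : ∀ a b, fuse a b = fuse b a
  assoc : ∀ a b c, fuse (fuse a b) c = fuse a (fuse b c)
  fusion : ∀ A : Set P, ∃ a, (∀ x ∈ A, fuse x a = a) ∧
    ∀ b, (∀ x ∈ A, fuse x b = b) → fuse a b = b
  satom : ℕ → Set P
  upward : ∀ (p : ℕ) (a b : P), fuse a b = b → a ∈ satom p → b ∈ satom p
  f : W → P
  V : ℕ → Set W

/-- The extension of the solution assignment `s` to the whole language `L_CPL`. -/
def PSModel.sol (M : PSModel) : CPL → Set M.P
  | .top => Set.univ
  | .atom p => M.satom p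
  | .neg φ => M.sol φ
  | .or φ ψ => M.sol φ ∩ M.sol ψ
  | .and φ ψ => {c | ∃ a ∈ M.sol φ, ∃ b ∈ M.sol ψ, c = M.fuse a b}

/-- Classical satisfaction of `L_CPL` formulas at a world. -/
def PSModel.satCPL (M : PSModel) : M.W → CPL → Prop
  | _, .top => True
  | w, .atom p => w ∈ M.V p
  | w, .neg φ => ¬ M.satCPL w φ
  | w, .or φ ψ => M.satCPL w φ ∨ M.satCPL w ψ
  | w, .and φ ψ => M.satCPL w φ ∧ M.satCPL w ψ
/-- Satisfaction of `L_Int` formulas in a problem-sensitive model: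
Boolean clauses are classical, `M,w ⊨ ⊞φ` iff `φ` holds at every world, and
`M,w ⊨ Iα` iff `α` holds at every conative alternative of `w` and the decision
problem `f(w)` lies in `s(α)`. -/
def PSModel.sat (M : PSModel) : M.W → Form → Prop
  | w, .of α => M.satCPL w α
  | w, .neg φ => ¬ M.sat w φ
  | w, .or φ ψ => M.sat w φ ∨ M.sat w ψ
  | w, .and φ ψ => M.sat w φ ∧ M.sat w ψ
  | _, .box φ => ∀ v, M.sat v φ
  | w, .int α => (∀ v, M.R w v → M.satCPL v α) ∧ M.f w ∈ M.sol α

/-! Intention is not closed under equivalence because the solution assignment of a problems model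
is fixed atom by atom, independently of the valuation, and `s(α ∨ ¬α) = s(α)`. So in a model
with one world and one problem where every atom is true but only `p` is solved, `p` and `q` are
necessarily equivalent while only `p` is intended; likewise `⊤` is intended but the tautology
`q ∨ ¬q` is not. -/

namespace PSModel

variable (M : PSModel)

theorem satCPL_imp {w : M.W} {φ ψ : CPL} :
    M.satCPL w (φ.imp ψ) ↔ (M.satCPL w φ → M.satCPL w ψ) := by
  simp only [CPL.imp, satCPL, imp_iff_not_or]

theorem satCPL_iff {w : M.W} {φ ψ : CPL} :
    M.satCPL w (φ.iff ψ) ↔ (M.satCPL w φ ↔ M.satCPL w ψ) :=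
  (and_congr M.satCPL_imp M.satCPL_imp).trans iff_iff_implies_and_implies.symm

theorem satCPL_top_iff_or_neg_self (w : M.W) (α : CPL) :
    M.satCPL w (CPL.top.iff (α.or α.neg)) :=
  M.satCPL_iff.2 ⟨fun _ => em _, fun _ => trivial⟩

theorem sol_or_neg_self (α : CPL) : M.sol (α.or α.neg) = M.sol α :=
  Set.inter_self _

theorem sat_int_top (w : M.W) : M.sat w (.int .top) :=
  ⟨fun _ _ => trivial, Set.mem_univ _⟩

theorem not_sat_int_of_notMem_sol {w : M.W} {α : CPL} (h : M.f w ∉ M.sol α) :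
    ¬ M.sat w (.int α) :=
  fun hI => h hI.2

def pointModel (S : Set ℕ) : PSModel where
  W := Unit
  Wnonempty := ⟨()⟩
  R _ _ := True
  serial _ := ⟨(), trivial⟩
  P := Unit
  Pnonempty := ⟨()⟩
  fuse _ _ := ()
  idem _ := rfl
  comm _ _ := rfl
  assoc _ _ _ := rfl
  fusion _ := ⟨(), fun _ _ => rfl, fun _ _ => rfl⟩
  satom p := Set.ofPred fun _ => p ∈ S
  upward _ _ _ _ h := h
  f _ := ()
  V _ := Set.univ

theorem pointModel_sat_int_atom_iff {S : Set ℕ} {p : ℕ} :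
    (pointModel S).sat () (.int (.atom p)) ↔ p ∈ S :=
  ⟨fun h => h.2, fun h => ⟨fun _ _ => trivial, h⟩⟩

theorem pointModel_satCPL_iff_atoms (S : Set ℕ) (w : (pointModel S).W) (p q : ℕ) :
    (pointModel S).satCPL w ((CPL.atom p).iff (CPL.atom q)) :=
  (satCPL_iff _).2 Iff.rfl

theorem not_pointModel_sat_int_or_neg_atom {S : Set ℕ} {q : ℕ} (hq : q ∉ S) :
    ¬ (pointModel S).sat () (.int ((CPL.atom q).or (CPL.atom q).neg)) :=
  not_sat_int_of_notMem_sol _ <| by rwa [sol_or_neg_self]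

end PSModel

open PSModel

/-- There are a problem-sensitive model `M`, a world `w`, and
distinct atoms `p, q` with `M,w ⊨ ⊞(p ↔ q)` and `M,w ⊨ Ip` but `M,w ⊭ Iq`.
Consequently, necessary equivalence `⊞(φ ↔ ψ) → (Iφ ↔ Iψ)`, necessary
entailment `⊞(φ → ψ) → (Iφ → Iψ)`, closure under logical entailment, and
closure under logical equivalence are all invalid over the class of
problem-sensitive models, even for atomic propositions. -/
theorem closure_principles_invalid :
    (∃ (M : PSModel) (w : M.W) (p q : ℕ), p ≠ q ∧
      M.sat w (.box (.of ((CPL.atom p).iff (CPL.atom q)))) ∧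
      M.sat w (.int (.atom p)) ∧ ¬ M.sat w (.int (.atom q))) ∧
    -- necessary equivalence is invalid
    (¬ ∀ (M : PSModel) (w : M.W) (φ ψ : CPL),
        M.sat w (.box (.of (φ.iff ψ))) →
          (M.sat w (.int φ) ↔ M.sat w (.int ψ))) ∧
    -- necessary entailment is invalid
    (¬ ∀ (M : PSModel) (w : M.W) (φ ψ : CPL),
        M.sat w (.box (.of (φ.imp ψ))) →
          M.sat w (.int φ) → M.sat w (.int ψ)) ∧
    -- closure under logical entailment is invalid
    (¬ ∀ φ ψ : CPL,
        (∀ (M : PSModel) (w : M.W), M.satCPL w (φ.imp ψ)) →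
          ∀ (M : PSModel) (w : M.W), M.sat w (.int φ) → M.sat w (.int ψ)) ∧
    -- closure under logical equivalence is invalid
    (¬ ∀ φ ψ : CPL,
        (∀ (M : PSModel) (w : M.W), M.satCPL w (φ.iff ψ)) →
          ∀ (M : PSModel) (w : M.W), (M.sat w (.int φ) ↔ M.sat w (.int ψ))) := by
  set M := pointModel {0}
  have hbox : M.sat () (.box (.of ((CPL.atom 0).iff (CPL.atom 1)))) :=
    fun v => pointModel_satCPL_iff_atoms {0} v 0 1
  have hIp : M.sat () (.int (.atom 0)) := pointModel_sat_int_atom_iff.2 rfl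
  have hIq : ¬ M.sat () (.int (.atom 1)) := fun h =>
    zero_ne_one (pointModel_sat_int_atom_iff.1 h).symm
  have hItop : M.sat () (.int .top) := M.sat_int_top ()
  have hIlem : ¬ M.sat () (.int ((CPL.atom 1).or (CPL.atom 1).neg)) :=
    not_pointModel_sat_int_or_neg_atom zero_ne_one.symm
  have htaut : ∀ (N : PSModel) (w : N.W),
      N.satCPL w (CPL.top.iff ((CPL.atom 1).or (CPL.atom 1).neg)) :=
    fun N w => N.satCPL_top_iff_or_neg_self w _
  refine ⟨⟨M, (), 0, 1, zero_ne_one, hbox, hIp, hIq⟩, fun h => hIq ((h M () _ _ hbox).1 hIp),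
    fun h => hIq (h M () _ _ (fun v => (hbox v).1) hIp),
    fun h => hIlem (h _ _ (fun N w => (htaut N w).1) M () hItop),
    fun h => hIlem ((h _ _ htaut M ()).1 hItop)⟩
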